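/- (Hayashi–Nagaoka operator inequality.) Let S and T be positive semidefinite operators on a finite-dimensional Hilbert space such that S ≤ 1 (i.e., 1 − S is positive semidefinite) and S + T is positive definite. Then for every constant c > 0, 1 − (S+T)^{−1/2} S (S+T)^{−1/2} ≤ (1+c)(1 − S) + (2 + c + c⁻¹) T, where ≤ is the Loewner order and (S+T)^{−1/2} is the inverse of the positive definite square root of S+T. -/

import Mathlib

open scoped Matrix Kronecker BigOperators
open Matrix
open scoped ComplexOrder Classical

namespace Paper

/-- Total positive semidefinite square root (junk value `0` off the PSD cone). -/
noncomputable def psqrt {n : Type*} [Fintype n] [DecidableEq n] (A : Matrix n n ℂ) :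
    Matrix n n ℂ :=
  if h : A.PosSemidef then
    (h.1.eigenvectorUnitary : Matrix n n ℂ) *
      Matrix.diagonal ((↑) ∘ (Real.sqrt ·) ∘ h.1.eigenvalues) *
      (star (h.1.eigenvectorUnitary : Matrix n n ℂ))
  else 0

/-- Trace norm `‖A‖₁ = Tr √(AᴴA)`. -/
noncomputable def traceNorm {n : Type*} [Fintype n] [DecidableEq n] (A : Matrix n n ℂ) : ℝ :=
  (psqrt (Aᴴ * A)).trace.re

/-- Fidelity `F(ρ,σ) = ‖√ρ√σ‖₁` of positive semidefinite matrices. -/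
noncomputable def fidelity {n : Type*} [Fintype n] [DecidableEq n] (ρ σ : Matrix n n ℂ) : ℝ :=
  traceNorm (psqrt ρ * psqrt σ)

/-- Purified distance `P(ρ,σ) = √(1 - F(ρ,σ)²)`. -/
noncomputable def purDist {n : Type*} [Fintype n] [DecidableEq n] (ρ σ : Matrix n n ℂ) : ℝ :=
  Real.sqrt (1 - fidelity ρ σ ^ 2)

/-- A state (density matrix): positive semidefinite with unit trace. -/
def IsState {n : Type*} [Fintype n] (ρ : Matrix n n ℂ) : Prop :=
  ρ.PosSemidef ∧ ρ.trace = 1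

/-- A probability mass function on a finite alphabet. -/
def IsPMF {X : Type*} [Fintype X] (p : X → ℝ) : Prop :=
  (∀ x, 0 ≤ p x) ∧ ∑ x, p x = 1

/-- Support inclusion `supp ρ ⊆ supp σ`, phrased via kernels (equivalent for PSD matrices). -/
def SuppSubset {n : Type*} [Fintype n] (ρ σ : Matrix n n ℂ) : Prop :=
  ∀ v : n → ℂ, σ.mulVec v = 0 → ρ.mulVec v = 0

/-- Loewner order `A ≤ B`. -/
def LLE {n : Type*} [Fintype n] (A B : Matrix n n ℂ) : Prop := (B - A).PosSemidef

/-- Binary logarithm of a Hermitian matrix, taken on its support via functional calculus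
(`Real.logb 2 0 = 0` takes care of the kernel). -/
noncomputable def matLog {n : Type*} [Fintype n] [DecidableEq n] (A : Matrix n n ℂ) :
    Matrix n n ℂ :=
  if hA : A.IsHermitian then
    (hA.eigenvectorUnitary : Matrix n n ℂ) *
      Matrix.diagonal (fun i => (Real.logb 2 (hA.eigenvalues i) : ℂ)) *
      (star (hA.eigenvectorUnitary : Matrix n n ℂ))
  else 0

/-- Quantum relative entropy (base 2): `D(ρ‖σ) = Tr(ρ log₂ ρ) - Tr(ρ log₂ σ)`. -/
noncomputable def relEnt {n : Type*} [Fintype n] [DecidableEq n] (ρ σ : Matrix n n ℂ) : ℝ :=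
  ((ρ * matLog ρ).trace - (ρ * matLog σ).trace).re

/-- Max-relative entropy `D_max(ρ‖σ) = inf {λ | ρ ≤ 2^λ σ}`. -/
noncomputable def dMax {n : Type*} [Fintype n] (ρ σ : Matrix n n ℂ) : ℝ :=
  sInf {l : ℝ | LLE ρ ((2 : ℝ) ^ l • σ)}

/-- Smooth max-relative entropy `D_max^ε(ρ‖σ) = min_{ρ' ∈ B^ε(ρ)} D_max(ρ'‖σ)`. -/
noncomputable def dMaxSmooth {n : Type*} [Fintype n] [DecidableEq n]
    (ε : ℝ) (ρ σ : Matrix n n ℂ) : ℝ :=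
  sInf {d : ℝ | ∃ ρ' : Matrix n n ℂ, IsState ρ' ∧ purDist ρ' ρ ≤ ε ∧ d = dMax ρ' σ}

/-- Partial trace over the second (B) factor. -/
noncomputable def ptraceB {a b : Type*} [Fintype b]
    (M : Matrix (a × b) (a × b) ℂ) : Matrix a a ℂ :=
  Matrix.of fun i j => ∑ k : b, M (i, k) (j, k)

/-- Partial trace over the first (A) factor. -/
noncomputable def ptraceA {a b : Type*} [Fintype a]
    (M : Matrix (a × b) (a × b) ℂ) : Matrix b b ℂ :=
  Matrix.of fun i j => ∑ k : a, M (k, i) (k, j)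

/-- The cq state `Σ_x p(x) |x⟩⟨x| ⊗ ρ_x`. -/
noncomputable def cqState {X d : Type*} [Fintype X] [DecidableEq X] [Fintype d] [DecidableEq d]
    (p : X → ℝ) (ρ : X → Matrix d d ℂ) : Matrix (X × d) (X × d) ℂ :=
  ∑ x, p x • (Matrix.single x x (1 : ℂ) ⊗ₖ ρ x)

/-- The Markov state `ρ^{A-X-B} = Σ_x p(x)|x⟩⟨x| ⊗ ρ_x^A ⊗ ρ_x^B` of a cq state. -/
noncomputable def markovState {X a b : Type*} [Fintype X] [DecidableEq X]
    [Fintype a] [DecidableEq a] [Fintype b] [DecidableEq b]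
    (p : X → ℝ) (ρ : X → Matrix (a × b) (a × b) ℂ) :
    Matrix (X × (a × b)) (X × (a × b)) ℂ :=
  cqState p fun x => ptraceB (ρ x) ⊗ₖ ptraceA (ρ x)

/-- Conditional mutual information `I(A;B|X)_ρ = D(ρ^{XAB} ‖ ρ^{A-X-B})` of a cq state. -/
noncomputable def condMI {X a b : Type*} [Fintype X] [DecidableEq X]
    [Fintype a] [DecidableEq a] [Fintype b] [DecidableEq b]
    (p : X → ℝ) (ρ : X → Matrix (a × b) (a × b) ℂ) : ℝ :=
  relEnt (cqState p ρ) (markovState p ρ)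

/-- `D_max^ε(A;B|X)_ρ = D_max^ε(ρ^{XAB} ‖ ρ^{A-X-B})` of a cq state. -/
noncomputable def condDmaxSmooth {X a b : Type*} [Fintype X] [DecidableEq X]
    [Fintype a] [DecidableEq a] [Fintype b] [DecidableEq b]
    (ε : ℝ) (p : X → ℝ) (ρ : X → Matrix (a × b) (a × b) ℂ) : ℝ :=
  dMaxSmooth ε (cqState p ρ) (markovState p ρ)

/-- `Ĩ_max^ε(A;B|X)_ρ`: minimum of `D_max(ρ' ‖ Σ_x p'(x)|x⟩⟨x| ⊗ ρ'^A_x ⊗ ρ^B_x)` over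
cq states `ρ'` in the ε-ball around `ρ^{XAB}`. -/
noncomputable def condImaxTilde {X a b : Type*} [Fintype X] [DecidableEq X]
    [Fintype a] [DecidableEq a] [Fintype b] [DecidableEq b]
    (ε : ℝ) (p : X → ℝ) (ρ : X → Matrix (a × b) (a × b) ℂ) : ℝ :=
  sInf {d : ℝ | ∃ (p' : X → ℝ) (ρ' : X → Matrix (a × b) (a × b) ℂ),
    IsPMF p' ∧ (∀ x, IsState (ρ' x)) ∧
    purDist (cqState p' ρ') (cqState p ρ) ≤ ε ∧
    d = dMax (cqState p' ρ') (cqState p' fun x => ptraceB (ρ' x) ⊗ₖ ptraceA (ρ x))}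

/-- `Ĩ_max^ε(A;B)_ρ = inf_{ρ' ∈ B^ε(ρ)} D_max(ρ' ‖ ρ'^A ⊗ ρ^B)` for a bipartite state. -/
noncomputable def bipImaxTilde {a b : Type*} [Fintype a] [DecidableEq a]
    [Fintype b] [DecidableEq b] (ε : ℝ) (ρ : Matrix (a × b) (a × b) ℂ) : ℝ :=
  sInf {d : ℝ | ∃ ρ' : Matrix (a × b) (a × b) ℂ, IsState ρ' ∧ purDist ρ' ρ ≤ ε ∧
    d = dMax ρ' (ptraceB ρ' ⊗ₖ ptraceA ρ)}

/-- The binary entropy function. -/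
noncomputable def binEnt (ε : ℝ) : ℝ :=
  -(ε * Real.logb 2 ε) - (1 - ε) * Real.logb 2 (1 - ε)

/-- Hypothesis testing relative entropy `D_H^ε(ρ‖σ)`. -/
noncomputable def dH {n : Type*} [Fintype n] [DecidableEq n] (ε : ℝ) (ρ σ : Matrix n n ℂ) : ℝ :=
  sSup {d : ℝ | ∃ Λ : Matrix n n ℂ, Λ.PosSemidef ∧ (1 - Λ).PosSemidef ∧
    1 - ε ≤ ((Λ * ρ).trace).re ∧ d = -Real.logb 2 (((Λ * σ).trace).re)}

/-- The convex-split state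
`τ^{XAB₁…Bₙ} = Σ_x p(x)|x⟩⟨x| ⊗ (1/n) Σ_j ρ_x^{AB_j} ⊗ (⊗_{i≠j} σ_x^{B_i})`,
written entrywise on the index type `X × (A × Bⁿ)`. -/
noncomputable def tauState {X a b : Type*} [Fintype X] [DecidableEq X]
    [Fintype a] [Fintype b]
    (p : X → ℝ) (ρ : X → Matrix (a × b) (a × b) ℂ) (σ : X → Matrix b b ℂ) (nn : ℕ) :
    Matrix (X × (a × (Fin nn → b))) (X × (a × (Fin nn → b))) ℂ :=
  Matrix.of fun q q' =>
    (if q.1 = q'.1 then (p q.1 : ℂ) else 0) *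
      ((nn : ℂ)⁻¹ * ∑ j : Fin nn,
        ρ q.1 (q.2.1, q.2.2 j) (q'.2.1, q'.2.2 j) *
          ∏ i ∈ Finset.univ.erase j, σ q.1 (q.2.2 i) (q'.2.2 i))

/-- The product reference state
`Σ_x p(x)|x⟩⟨x| ⊗ ρ_x^A ⊗ σ_x^{B₁} ⊗ … ⊗ σ_x^{Bₙ}`, entrywise. -/
noncomputable def refState {X a b : Type*} [Fintype X] [DecidableEq X]
    [Fintype a] [Fintype b]
    (p : X → ℝ) (ρ : X → Matrix (a × b) (a × b) ℂ) (σ : X → Matrix b b ℂ) (nn : ℕ) :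
    Matrix (X × (a × (Fin nn → b))) (X × (a × (Fin nn → b))) ℂ :=
  Matrix.of fun q q' =>
    (if q.1 = q'.1 then (p q.1 : ℂ) else 0) *
      (ptraceB (ρ q.1) q.2.1 q'.2.1 * ∏ i : Fin nn, σ q.1 (q.2.2 i) (q'.2.2 i))

end Paper

/-!
Put `N = √(S + T)`. Since `S² ≤ S ≤ S + T = N²`, operator monotonicity of the square root gives
`S ≤ N`. As `1 - N⁻¹ S N⁻¹ = N⁻¹ T N⁻¹`, conjugating by `N` turns the claim into
`T ≤ N ((1 + c)(1 - S) + (2 + c + c⁻¹) T) N`. Splitting `1 = (1 - N) + N`, the weighted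
Cauchy–Schwarz inequality `(x + y)* T (x + y) ≤ (1 + c) x* T x + (1 + c⁻¹) y* T y` bounds `T` by
`(1 + c)(1 - N) T (1 - N) + (1 + c⁻¹) N T N`, and
`(1 - N) T (1 - N) ≤ (1 - N) N² (1 - N) = N (1 - N)² N ≤ N (1 - S + T) N`
because `(1 - N)² = 1 - 2N + S + T` and `S ≤ N`.
-/

open scoped Ring

section StarOrderedRing

variable {A : Type*} [Ring A] [StarRing A] [PartialOrder A] [StarOrderedRing A] {s t n : A}

theorem inverse_conjugate_le_of_le_conjugate {a b : A} (hn : IsSelfAdjoint n) (hu : IsUnit n)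
    (h : a ≤ n * b * n) : n⁻¹ʳ * a * n⁻¹ʳ ≤ b := by
  simpa only [mul_assoc, Ring.inverse_mul_cancel_left _ _ hu, Ring.mul_inverse_cancel _ hu,
    mul_one] using hn.ringInverse.conjugate_le_conjugate h

variable [Algebra ℝ A] [StarModule ℝ A]

theorem star_add_conjugate_le {a : A} (ha : 0 ≤ a) (x y : A) {c : ℝ} (hc : 0 < c) :
    star (x + y) * a * (x + y) ≤ (1 + c) • (star x * a * x) + (1 + c⁻¹) • (star y * a * y) := by
  set r := Real.sqrt c
  have hr : r ≠ 0 := (Real.sqrt_pos.mpr hc).ne'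
  have hrr : r * r = c := Real.mul_self_sqrt hc.le
  rw [← sub_nonneg]
  convert star_left_conjugate_nonneg ha (r • x - r⁻¹ • y) using 1
  simp only [star_sub, star_smul, star_trivial, star_add, add_mul, mul_add, sub_mul, mul_sub,
    smul_mul_assoc, mul_smul_comm]
  rw [← hrr]
  match_scalars <;> field_simp <;> ring

theorem le_conjugate_of_mul_self_eq_add (hs : 0 ≤ s) (ht : 0 ≤ t) (hn : IsSelfAdjoint n)
    (hnn : n * n = s + t) (hsn : s ≤ n) {c : ℝ} (hc : 0 < c) :
    t ≤ n * ((1 + c) • (1 - s) + (2 + c + c⁻¹) • t) * n := by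
  have h1n : IsSelfAdjoint (1 - n) := .sub (.one A) hn
  have hsplit : t ≤ (1 + c) • ((1 - n) * t * (1 - n)) + (1 + c⁻¹) • (n * t * n) := by
    simpa [h1n.star_eq, hn.star_eq] using star_add_conjugate_le ht (1 - n) n hc
  have hsq : (1 - n) * (1 - n) ≤ 1 - s + t := calc
    (1 - n) * (1 - n) = 1 - s + t - 2 • (n - s) := by
      rw [show (1 - n) * (1 - n) = 1 - 2 • n + n * n by noncomm_ring, hnn]; abel
    _ ≤ 1 - s + t := sub_le_self _ (nsmul_nonneg (sub_nonneg.2 hsn) 2)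
  have hfirst : (1 - n) * t * (1 - n) ≤ n * (1 - s + t) * n := calc
    (1 - n) * t * (1 - n) ≤ (1 - n) * (s + t) * (1 - n) :=
      h1n.conjugate_le_conjugate (le_add_of_nonneg_left hs)
    _ = n * ((1 - n) * (1 - n)) * n := by rw [← hnn]; noncomm_ring
    _ ≤ n * (1 - s + t) * n := hn.conjugate_le_conjugate hsq
  calc t ≤ (1 + c) • ((1 - n) * t * (1 - n)) + (1 + c⁻¹) • (n * t * n) := hsplit
    _ ≤ (1 + c) • (n * (1 - s + t) * n) + (1 + c⁻¹) • (n * t * n) := by gcongr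
    _ = n * ((1 + c) • (1 - s) + (2 + c + c⁻¹) • t) * n := by
      simp only [mul_add, add_mul, mul_sub, sub_mul, mul_smul_comm, smul_mul_assoc]
      module

theorem one_sub_inverse_conjugate_le (hs : 0 ≤ s) (ht : 0 ≤ t) (hn : IsSelfAdjoint n)
    (hu : IsUnit n) (hnn : n * n = s + t) (hsn : s ≤ n) {c : ℝ} (hc : 0 < c) :
    1 - n⁻¹ʳ * s * n⁻¹ʳ ≤ (1 + c) • (1 - s) + (2 + c + c⁻¹) • t := by
  have hone : n⁻¹ʳ * (s + t) * n⁻¹ʳ = 1 := by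
    simp only [← hnn, Ring.inverse_mul_cancel_left _ _ hu, Ring.mul_inverse_cancel _ hu]
  rw [show 1 - n⁻¹ʳ * s * n⁻¹ʳ = n⁻¹ʳ * t * n⁻¹ʳ by rw [← hone]; noncomm_ring]
  exact inverse_conjugate_le_of_le_conjugate hn hu
    (le_conjugate_of_mul_self_eq_add hs ht hn hnn hsn hc)

end StarOrderedRing

namespace CFC

variable {A : Type*} [CStarAlgebra A] [PartialOrder A] [StarOrderedRing A] {s t : A}

theorem mul_self_le_self_of_le_one (hs : 0 ≤ s) (hs1 : s ≤ 1) : s * s ≤ s := by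
  set r := sqrt s
  have hr : r * r = s := sqrt_mul_sqrt_self s
  calc s * s = r * s * r := by rw [← hr]; noncomm_ring
    _ ≤ r * 1 * r := conjugate_le_conjugate_of_nonneg hs1 (sqrt_nonneg s)
    _ = s := by rw [mul_one, hr]

theorem le_sqrt_add_of_le_one (hs : 0 ≤ s) (hs1 : s ≤ 1) (ht : 0 ≤ t) : s ≤ sqrt (s + t) :=
  calc s = sqrt (s * s) := (sqrt_mul_self s).symm
    _ ≤ sqrt (s + t) :=
      sqrt_le_sqrt _ _ ((mul_self_le_self_of_le_one hs hs1).trans (le_add_of_nonneg_right ht))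

end CFC

namespace Paper

open scoped MatrixOrder Matrix.Norms.L2Operator

theorem psqrt_eq_sqrt {n : Type*} [Fintype n] [DecidableEq n] {A : Matrix n n ℂ}
    (hA : A.PosSemidef) : psqrt A = CFC.sqrt A := by
  rw [psqrt, dif_pos hA, CFC.sqrt_eq_real_sqrt A hA.nonneg, cfcₙ_eq_cfc, hA.1.cfc_eq,
    IsHermitian.cfc, Unitary.conjStarAlgAut_apply]
  rfl

/-- Hayashi–Nagaoka operator inequality. -/
theorem hayashi_nagaoka {d : Type*} [Fintype d] [DecidableEq d]
    (S T : Matrix d d ℂ) (hS : S.PosSemidef) (hT : T.PosSemidef)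
    (hS1 : LLE S 1) (hST : (S + T).PosDef) (c : ℝ) (hc : 0 < c) :
    LLE (1 - (psqrt (S + T))⁻¹ * S * (psqrt (S + T))⁻¹)
      ((1 + c) • (1 - S) + (2 + c + c⁻¹) • T) := by
  rw [psqrt_eq_sqrt hST.posSemidef, nonsing_inv_eq_ringInverse]
  exact one_sub_inverse_conjugate_le hS.nonneg hT.nonneg (.of_nonneg (CFC.sqrt_nonneg _))
    ((CFC.isUnit_sqrt_iff _ hST.posSemidef.nonneg).mpr hST.isUnit) (CFC.sqrt_mul_sqrt_self _)
    (CFC.le_sqrt_add_of_le_one hS.nonneg hS1 hT.nonneg) hc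

end Paper
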